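/- Weissman's L1 concentration: let P be a probability distribution on a finite set of size Z and P̂ the empirical distribution from n i.i.d. samples drawn from P. Then for any δ > 0, P(‖P − P̂‖₁ ≥ √(2Z·log(2/δ)/n)) ≤ δ, where ‖·‖₁ is the L1 distance between distributions. -/

import Mathlib

/-!
Since `P` and `P̂` both have total mass one, `‖P - P̂‖₁ = 2 (P̂(A) - P(A))` for
`A = {z | P z < P̂ z}`. So if the L1 distance is at least `ε`, some subset `A` of the alphabet has
empirical count at least `n P(A) + n ε / 2`. For a fixed `A` the count is a sum of `n` independent
indicators, and Hoeffding's inequality bounds this event by `exp (-n ε² / 2) = (δ / 2) ^ Z`.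
A union bound over the `2 ^ Z` subsets gives `δ ^ Z ≤ δ`.
-/

open MeasureTheory ProbabilityTheory Finset Real

theorem sum_abs_sub_eq_two_mul_sum_filter_lt {α : Type*} [Fintype α] {p q : α → ℝ}
    (h : ∑ z, p z = ∑ z, q z) :
    ∑ z, |p z - q z| = 2 * ∑ z with p z < q z, (q z - p z) := by
  have hpt : ∀ z, |p z - q z| = 2 * (if p z < q z then q z - p z else 0) - (q z - p z) := by
    intro z
    split_ifs with hz
    · rw [abs_of_neg (by linarith)]; ring
    · rw [abs_of_nonneg (by linarith)]; ring
  have hzero : ∑ z, (q z - p z) = 0 := by rw [sum_sub_distrib, h, sub_self]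
  rw [sum_congr rfl fun z _ => hpt z, sum_sub_distrib, ← mul_sum, ← sum_filter, hzero, sub_zero]

theorem exists_finset_le_card_of_le_sum_abs {α : Type*} [Fintype α] [DecidableEq α]
    [MeasurableSpace α] [MeasurableSingletonClass α] (P : Measure α) [IsProbabilityMeasure P]
    {n : ℕ} (hn : 0 < n) (x : Fin n → α) {ε : ℝ}
    (h : ε ≤ ∑ z, |P.real {z} - (#{t | x t = z} : ℝ) / n|) :
    ∃ A : Finset α, n * P.real A + n * ε / 2 ≤ #{t | x t ∈ A} := by
  have hnR : (0 : ℝ) < n := by exact_mod_cast hn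
  have hcount : ∀ A : Finset α, ∑ z ∈ A, (#{t | x t = z} : ℝ) / n = #{t | x t ∈ A} / n := by
    intro A
    rw [← sum_div]
    exact_mod_cast congrArg (fun k : ℕ => (k : ℝ) / n) (sum_card_fiberwise_eq_card_filter univ A x)
  have hmass : ∑ z, P.real {z} = ∑ z, (#{t | x t = z} : ℝ) / n := by
    rw [sum_measureReal_singleton, coe_univ, probReal_univ, hcount, filter_true_of_mem
      fun t _ => mem_univ _, card_univ, Fintype.card_fin, div_self hnR.ne']
  refine ⟨({z | P.real {z} < #{t | x t = z} / n} : Finset α), ?_⟩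
  rw [sum_abs_sub_eq_two_mul_sum_filter_lt hmass, sum_sub_distrib, hcount,
    sum_measureReal_singleton] at h
  have := mul_le_mul_of_nonneg_left h hnR.le
  rw [mul_left_comm, mul_sub, mul_div_cancel₀ _ hnR.ne'] at this
  linarith

theorem measureReal_card_filter_mem_ge_le {Ω α ι : Type*} [MeasurableSpace Ω] [MeasurableSpace α]
    [Fintype ι] {μ : Measure Ω} [IsProbabilityMeasure μ] {P : Measure α} {X : ι → Ω → α}
    (hmeas : ∀ t, Measurable (X t)) (hindep : iIndepFun X μ) (hlaw : ∀ t, μ.map (X t) = P)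
    {A : Set α} (hA : MeasurableSet A) [DecidablePred (· ∈ A)] {r : ℝ} (hr : 0 ≤ r) :
    μ.real {ω | Fintype.card ι * P.real A + r ≤ #{t | X t ω ∈ A}} ≤
      exp (-2 * r ^ 2 / Fintype.card ι) := by
  have hind : Measurable (A.indicator (1 : α → ℝ)) := measurable_one.indicator hA
  have hmean : ∀ t, μ[fun ω => A.indicator 1 (X t ω)] = P.real A := fun t => by
    rw [← integral_map (hmeas t).aemeasurable hind.aestronglyMeasurable, hlaw t,
      integral_indicator_one hA]
  have hsubG : ∀ t ∈ (univ : Finset ι), HasSubgaussianMGF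
      (fun ω => A.indicator 1 (X t ω) - P.real A) ((‖(1 : ℝ) - 0‖₊ / 2) ^ 2) μ := fun t _ => by
    rw [← hmean t]
    exact hasSubgaussianMGF_of_mem_Icc (hind.comp (hmeas t)).aemeasurable
      (ae_of_all _ fun ω => by by_cases h : X t ω ∈ A <;> simp [h])
  have hoeff := HasSubgaussianMGF.measure_sum_ge_le_of_iIndepFun
    (hindep.comp (fun _ y => A.indicator 1 y - P.real A) fun _ => hind.sub_const _) hsubG hr
  have hsum : ∀ ω, ∑ t, (A.indicator 1 (X t ω) - P.real A) =
      #{t | X t ω ∈ A} - Fintype.card ι * P.real A := fun ω => by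
    simp [sum_sub_distrib, Set.indicator_apply]
  simp only [Function.comp_apply, hsum, le_sub_iff_add_le'] at hoeff
  convert hoeff using 2
  norm_num
  ring

theorem exp_neg_mul_sq_sqrt_log {Z n : ℕ} (hn : 0 < n) {δ : ℝ} (hδ : 0 < δ) (hδ2 : δ ≤ 2) :
    exp (-2 * (n * √(2 * Z * log (2 / δ) / n) / 2) ^ 2 / n) = (δ / 2) ^ Z := by
  have hnR : (0 : ℝ) < n := by exact_mod_cast hn
  have hlog : 0 ≤ log (2 / δ) := log_nonneg (by rwa [le_div_iff₀ hδ, one_mul])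
  have harg : -2 * (n * √(2 * Z * log (2 / δ) / n) / 2) ^ 2 / n = Z * log (δ / 2) := by
    rw [div_pow, mul_pow, sq_sqrt (by positivity), ← inv_div 2 δ, log_inv]
    field_simp
  rw [harg, exp_nat_mul, exp_log (by positivity)]

/-- Weissman's L1 concentration for the empirical distribution of `n` i.i.d.
samples from a distribution `P` on a finite alphabet of size `Z`. -/
theorem weissman_l1 {Ω : Type*} [MeasurableSpace Ω]
    (μ : Measure Ω) [IsProbabilityMeasure μ]
    (Z n : ℕ) (hn : 0 < n)
    (P : Measure (Fin Z)) [IsProbabilityMeasure P]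
    (X : Fin n → Ω → Fin Z) (hmeas : ∀ t, Measurable (X t))
    (hindep : ProbabilityTheory.iIndepFun X μ)
    (hlaw : ∀ t, Measure.map (X t) μ = P)
    (δ : ℝ) (hδ : 0 < δ) :
    μ {ω | Real.sqrt (2 * Z * Real.log (2 / δ) / n) ≤
        ∑ z : Fin Z,
          |(P {z}).toReal - ((Finset.univ.filter fun t => X t ω = z).card : ℝ) / n|}
      ≤ ENNReal.ofReal δ := by
  classical
  rw [ENNReal.le_ofReal_iff_toReal_le (measure_ne_top _ _) hδ.le, ← measureReal_def]
  rcases le_or_gt 1 δ with hδ1 | hδ1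
  · exact measureReal_le_one.trans hδ1
  have hZ : 0 < Z := Fin.pos_iff_nonempty.mpr (nonempty_of_isProbabilityMeasure P)
  set ε := √(2 * Z * log (2 / δ) / n)
  set E : Finset (Fin Z) → Set Ω :=
    fun A => {ω | n * P.real A + n * ε / 2 ≤ #{t | X t ω ∈ (A : Set (Fin Z))}}
  have hcover : {ω | ε ≤ ∑ z, |(P {z}).toReal - (#{t | X t ω = z} : ℝ) / n|} ⊆ ⋃ A, E A :=
    fun ω hω => Set.mem_iUnion.mpr <| by
      simpa [E] using exists_finset_le_card_of_le_sum_abs P hn (X · ω) hω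
  have htail : ∀ A, μ.real (E A) ≤ (δ / 2) ^ Z := fun A => by
    have := measureReal_card_filter_mem_ge_le hmeas hindep hlaw A.measurableSet
      (by positivity : 0 ≤ (n : ℝ) * ε / 2)
    rwa [Fintype.card_fin, exp_neg_mul_sq_sqrt_log hn hδ (by linarith)] at this
  calc _ ≤ μ.real (⋃ A, E A) := measureReal_mono hcover
    _ ≤ ∑ A, μ.real (E A) := measureReal_iUnion_fintype_le E
    _ ≤ ∑ A : Finset (Fin Z), (δ / 2) ^ Z := sum_le_sum fun A _ => htail A
    _ = δ ^ Z := by simp [Fintype.card_finset, ← mul_pow, mul_div_cancel₀]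
    _ ≤ δ := pow_le_of_le_one hδ.le hδ1.le hZ.ne'
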